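/- Let k ≥ 3, s_c = 1 - 2/k, φ₁ a fixed nonzero Schwartz function on ℝ², and for m ∈ ℕ set c₁ = m+1, c₂ = m. For fixed t > 0, define u_{c}(x,y,t) = φ_c(x - ct, y) where φ_c(x,y) = c^{1/k}φ₁(√c x, √c y). Then ⟨u_{c₁}(t), u_{c₂}(t)⟩_{Ḣ^{s_c}} → 0 as m → ∞. -/

import Mathlib

/-!
On the Fourier side `û_c(ξ) = c^{1/k - 1} 𝐞(-c t ξ₀) φ̂₁(ξ / √c)`, so in `û_{c₁} conj û_{c₂}` the
phases combine to `𝐞(-(c₁ - c₂) t ξ₀)`. After the substitution `ξ = √c₁ η` the inner product is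
`(c₁ / c₂)^{1 - 1/k}` times the Fourier transform of `η ↦ ‖η‖^{2 s_c} φ̂₁(η) conj φ̂₁(√(c₁/c₂) η)`
at `√c₁ (c₁ - c₂) t e₀`; the critical exponent `s_c` is the one for which the powers of `c` reduce
to this ratio. As `m → ∞` the evaluation point escapes to infinity while the dilated integrands
converge in `L¹`, so the Riemann–Lebesgue lemma gives the limit `0`.
-/

open MeasureTheory Filter
open scoped FourierTransform Topology

noncomputable section

abbrev E2 := EuclideanSpace ℝ (Fin 2)

/-- Homogeneous Sobolev inner product `⟨f,g⟩_{Ḣ^s}`. -/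
def homInner (s : ℝ) (f g : E2 → ℂ) : ℂ :=
  ∫ ξ : E2, (‖ξ‖ ^ (2 * s) : ℝ) • (𝓕 f ξ * (starRingEnd ℂ) (𝓕 g ξ))

/-- The travelling solitary wave at time `t`:
`u_c(x,y,t) = φ_c(x - ct, y)` with `φ_c(x,y) = c^{1/k} φ₁(√c x, √c y)`. -/
def travWave (k : ℕ) (φ₁ : SchwartzMap E2 ℂ) (c t : ℝ) : E2 → ℂ :=
  fun p => (c ^ ((1 : ℝ) / k) : ℝ) •
    φ₁ (Real.sqrt c • (p - (c * t) • (EuclideanSpace.single (0 : Fin 2) (1 : ℝ))))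

open Module ComplexConjugate
open scoped RealInnerProductSpace

theorem Real.rpow_le_one_add_pow {x p : ℝ} (hx : 0 ≤ x) (hp : 0 ≤ p) {n : ℕ} (hpn : p ≤ n) :
    x ^ p ≤ 1 + x ^ n := by
  rcases le_or_gt x 1 with hx1 | hx1
  · linarith [Real.rpow_le_one hx hx1 hp, pow_nonneg hx n]
  · have := Real.rpow_le_rpow_of_exponent_le hx1.le hpn
    rw [Real.rpow_natCast] at this
    linarith

theorem SchwartzMap.integrable_rpow_norm_smul {D F : Type*} [NormedAddCommGroup D] [NormedSpace ℝ D]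
    [MeasurableSpace D] [BorelSpace D] [SecondCountableTopology D] [NormedAddCommGroup F]
    [NormedSpace ℝ F] (μ : Measure D) [μ.HasTemperateGrowth] (f : SchwartzMap D F) {p : ℝ}
    (hp : 0 ≤ p) : Integrable (fun x => ‖x‖ ^ p • f x) μ := by
  refine ((f.integrable_pow_mul μ 0).add (f.integrable_pow_mul μ ⌈p⌉₊)).mono'
    (((continuous_norm.rpow_const fun _ => Or.inr hp).smul f.continuous).aestronglyMeasurable)
    (Eventually.of_forall fun x => ?_)
  rw [norm_smul, Real.norm_of_nonneg (Real.rpow_nonneg (norm_nonneg x) p)]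
  simpa [add_mul] using mul_le_mul_of_nonneg_right
    (Real.rpow_le_one_add_pow (norm_nonneg x) hp (Nat.le_ceil p)) (norm_nonneg (f x))

theorem tendsto_integral_norm_mul_comp_smul_sub {W : Type*} [NormedAddCommGroup W]
    [NormedSpace ℝ W] [MeasurableSpace W] [OpensMeasurableSpace W]
    {μ : Measure W} {G φ : W → ℂ} (hG : Integrable G μ) (hφ : Continuous φ) {C : ℝ}
    (hC : ∀ v, ‖φ v‖ ≤ C) :
    Tendsto (fun r : ℝ => ∫ v, ‖G v * φ (r • v) - G v * φ v‖ ∂μ) (𝓝 1) (𝓝 0) := by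
  have hlim : ∀ v, Tendsto (fun r : ℝ => ‖G v * φ (r • v) - G v * φ v‖) (𝓝 1) (𝓝 0) := by
    intro v
    have hcont : Continuous fun r : ℝ => ‖G v * φ (r • v) - G v * φ v‖ := by fun_prop
    simpa using hcont.tendsto 1
  simpa using tendsto_integral_filter_of_dominated_convergence
    (F := fun r v => ‖G v * φ (r • v) - G v * φ v‖) (fun v => 2 * C * ‖G v‖)
    (Eventually.of_forall fun r =>
      ((hG.1.mul (hφ.comp (continuous_const_smul r)).aestronglyMeasurable).sub
        (hG.1.mul hφ.aestronglyMeasurable)).norm)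
    (Eventually.of_forall fun r => Eventually.of_forall fun v => by
      rw [norm_norm, ← mul_sub, norm_mul]
      nlinarith [norm_sub_le (φ (r • v)) (φ v), hC (r • v), hC v, norm_nonneg (G v)])
    ((hG.norm.const_mul (2 * C)).congr (Eventually.of_forall fun v => by ring))
    (Eventually.of_forall hlim)

section Fourier

variable {V E : Type*} [NormedAddCommGroup V] [InnerProductSpace ℝ V] [FiniteDimensional ℝ V]
  [MeasurableSpace V] [BorelSpace V] [NormedAddCommGroup E] [NormedSpace ℂ E]

theorem Real.fourier_const_smul (a : ℝ) (f : V → E) (w : V) :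
    𝓕 (fun v => a • f v) w = a • 𝓕 f w := by
  simp only [Real.fourier_eq, smul_comm _ a, integral_smul]

theorem Real.fourier_comp_sub (f : V → E) (a w : V) :
    𝓕 (fun v => f (v - a)) w = 𝐞 (-⟪a, w⟫) • 𝓕 f w := by
  have := congrFun (VectorFourier.fourierIntegral_comp_add_right 𝐞 volume (innerₗ V) f (-a)) w
  simp only [inner_neg_left, innerₗ_apply_apply, ← sub_eq_add_neg] at this
  exact this

theorem Real.fourier_comp_smul (f : V → E) {r : ℝ} (hr : r ≠ 0) (w : V) :
    𝓕 (fun v => f (r • v)) w = |(r ^ finrank ℝ V)⁻¹| • 𝓕 f (r⁻¹ • w) := by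
  rw [Real.fourier_eq, Real.fourier_eq,
    ← Measure.integral_comp_smul volume (fun v => 𝐞 (-⟪v, r⁻¹ • w⟫) • f v) r]
  simp_rw [real_inner_smul_left, real_inner_smul_right, mul_inv_cancel_left₀ hr]

theorem Real.tendsto_fourier_of_tendsto_integral_norm_sub {ι : Type*} {l : Filter ι}
    {F : ι → V → E} {g : V → E}
    (hF : ∀ i, Integrable (F i)) (hg : Integrable g)
    (hFg : Tendsto (fun i => ∫ v, ‖F i v - g v‖) l (𝓝 0)) {w : ι → V}
    (hw : Tendsto w l (cocompact V)) :
    Tendsto (fun i => 𝓕 (F i) (w i)) l (𝓝 0) := by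
  have hclose : ∀ i, ‖𝓕 (F i) (w i) - 𝓕 g (w i)‖ ≤ ∫ v, ‖F i v - g v‖ := fun i => by
    calc ‖𝓕 (F i) (w i) - 𝓕 g (w i)‖ = ‖𝓕 (F i - g) (w i)‖ := by
          simp only [Real.fourier_eq, Pi.sub_apply, smul_sub]
          rw [integral_sub ((Real.fourierIntegral_convergent_iff _).2 (hF i))
            ((Real.fourierIntegral_convergent_iff _).2 hg)]
      _ ≤ ∫ v, ‖F i v - g v‖ := VectorFourier.norm_fourierIntegral_le_integral_norm _ _ _ _ _
  have hRL : Tendsto (fun i => 𝓕 g (w i)) l (𝓝 0) :=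
    (tendsto_integral_exp_inner_smul_cocompact g).comp hw
  simpa using (squeeze_zero_norm hclose hFg).add hRL

theorem Real.tendsto_fourier_mul_comp_smul {ι : Type*} {l : Filter ι} {G φ : V → ℂ}
    (hG : Integrable G) (hφ : Continuous φ) {C : ℝ} (hC : ∀ v, ‖φ v‖ ≤ C) {ρ : ι → ℝ}
    (hρ : Tendsto ρ l (𝓝 1)) {w : ι → V} (hw : Tendsto w l (cocompact V)) :
    Tendsto (fun i => 𝓕 (fun v => G v * φ (ρ i • v)) (w i)) l (𝓝 0) :=
  Real.tendsto_fourier_of_tendsto_integral_norm_sub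
    (fun i => hG.mul_bdd (hφ.comp (continuous_const_smul (ρ i))).aestronglyMeasurable
      (Eventually.of_forall fun _ => hC _))
    (hG.mul_bdd hφ.aestronglyMeasurable (Eventually.of_forall hC))
    ((tendsto_integral_norm_mul_comp_smul_sub hG hφ hC).comp hρ) hw

end Fourier

theorem tendsto_smul_const_cocompact {V : Type*} [NormedAddCommGroup V] [NormedSpace ℝ V]
    [ProperSpace V] {ι : Type*} {l : Filter ι} {f : ι → ℝ} (hf : Tendsto f l atTop) {v : V}
    (hv : v ≠ 0) : Tendsto (fun i => f i • v) l (cocompact V) := by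
  rw [← Metric.cobounded_eq_cocompact, ← tendsto_norm_atTop_iff_cobounded]
  simp only [norm_smul]
  exact (tendsto_norm_atTop_atTop.comp hf).atTop_mul_const (norm_pos_iff.2 hv)

theorem tendsto_natCast_add_one_rpow_mul_rpow {p q : ℝ} (hpq : p + q = 0) :
    Tendsto (fun m : ℕ => ((m : ℝ) + 1) ^ p * (m : ℝ) ^ q) atTop (𝓝 1) := by
  have hratio : Tendsto (fun m : ℕ => ((m : ℝ) / (m + 1)) ^ q) atTop (𝓝 1) := by
    simpa using (tendsto_natCast_div_add_atTop (1 : ℝ)).rpow_const (Or.inl one_ne_zero) (p := q)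
  refine hratio.congr' ((eventually_ge_atTop 1).mono fun m hm => ?_)
  have hm : (0 : ℝ) < m := by exact_mod_cast hm
  rw [Real.div_rpow hm.le (by positivity), eq_neg_of_add_eq_zero_left hpq]
  dsimp only
  rw [Real.rpow_neg (by positivity)]
  ring

theorem tendsto_sqrt_natCast_add_one_div_sqrt :
    Tendsto (fun m : ℕ => √((m : ℝ) + 1) / √m) atTop (𝓝 1) := by
  have := ((Real.continuous_sqrt.tendsto 1).comp (tendsto_natCast_div_add_atTop (1 : ℝ))).inv₀
    (by simp)
  simpa [Function.comp_def, Real.sqrt_div' _ (Nat.cast_add_one_pos _).le] using this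

theorem Real.sqrt_rpow_two_mul {c : ℝ} (hc : 0 ≤ c) (s : ℝ) : √c ^ (2 * s) = c ^ s := by
  rw [Real.sqrt_eq_rpow, ← Real.rpow_mul hc]
  ring_nf

local notation "e₀" => EuclideanSpace.single (0 : Fin 2) (1 : ℝ)

theorem fourier_travWave (k : ℕ) (φ₁ : SchwartzMap E2 ℂ) {c : ℝ} (hc : 0 < c) (t : ℝ) (ξ : E2) :
    𝓕 (travWave k φ₁ c t) ξ =
      (c ^ ((1 : ℝ) / k) * c⁻¹) • 𝐞 (-⟪(c * t) • e₀, ξ⟫) • 𝓕 φ₁ ((√c)⁻¹ • ξ) := by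
  have hsqrt : √c ≠ 0 := (Real.sqrt_pos.2 hc).ne'
  have hdil : |((√c) ^ finrank ℝ E2)⁻¹| = c⁻¹ := by
    rw [finrank_euclideanSpace_fin, Real.sq_sqrt hc.le, abs_of_pos (inv_pos.2 hc)]
  unfold travWave
  rw [Real.fourier_const_smul, Real.fourier_comp_sub (fun q => φ₁ (√c • q)),
    Real.fourier_comp_smul _ hsqrt, hdil, SchwartzMap.fourier_coe, smul_comm _ (c⁻¹), smul_smul]

theorem fourier_travWave_mul_conj (k : ℕ) (φ₁ : SchwartzMap E2 ℂ) {c₁ c₂ : ℝ} (hc₁ : 0 < c₁)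
    (hc₂ : 0 < c₂) (t : ℝ) (ξ : E2) :
    𝓕 (travWave k φ₁ c₁ t) ξ * conj (𝓕 (travWave k φ₁ c₂ t) ξ) =
      ((c₁ ^ ((1 : ℝ) / k) * c₁⁻¹) * (c₂ ^ ((1 : ℝ) / k) * c₂⁻¹)) •
        𝐞 (-⟪((c₁ - c₂) * t) • e₀, ξ⟫) • (𝓕 φ₁ ((√c₁)⁻¹ • ξ) * conj (𝓕 φ₁ ((√c₂)⁻¹ • ξ))) := by
  have hphase : (𝐞 (-⟪(c₁ * t) • e₀, ξ⟫) : ℂ) * conj (𝐞 (-⟪(c₂ * t) • e₀, ξ⟫) : ℂ) =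
      𝐞 (-⟪((c₁ - c₂) * t) • e₀, ξ⟫) := by
    rw [← Circle.coe_inv_eq_conj, ← Circle.coe_mul, ← AddChar.map_neg_eq_inv,
      ← AddChar.map_add_eq_mul, sub_mul, sub_smul, inner_sub_left]
    ring_nf
  rw [fourier_travWave k φ₁ hc₁, fourier_travWave k φ₁ hc₂]
  simp only [Circle.smul_def, Complex.real_smul, smul_eq_mul, map_mul, Complex.conj_ofReal]
  rw [← hphase]
  push_cast
  ring

theorem homInner_travWave (s : ℝ) (k : ℕ) (φ₁ : SchwartzMap E2 ℂ) {c₁ c₂ : ℝ} (hc₁ : 0 < c₁)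
    (hc₂ : 0 < c₂) (t : ℝ) :
    homInner s (travWave k φ₁ c₁ t) (travWave k φ₁ c₂ t) =
      (c₁ ^ (s + 1 / k) * c₂ ^ ((1 : ℝ) / k - 1)) •
        𝓕 (fun η => (‖η‖ ^ (2 * s) • 𝓕 φ₁ η) * conj (𝓕 φ₁ ((√c₁ / √c₂) • η)))
          ((√c₁ * ((c₁ - c₂) * t)) • e₀) := by
  set a := (c₁ - c₂) * t
  set Φ : E2 → ℂ := fun ξ => ‖ξ‖ ^ (2 * s) •
    𝐞 (-⟪a • e₀, ξ⟫) • (𝓕 φ₁ ((√c₁)⁻¹ • ξ) * conj (𝓕 φ₁ ((√c₂)⁻¹ • ξ)))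
  have hsqrt : √c₁ ≠ 0 := (Real.sqrt_pos.2 hc₁).ne'
  have hΦ : ∀ η, Φ (√c₁ • η) = √c₁ ^ (2 * s) •
      𝐞 (-⟪η, (√c₁ * a) • e₀⟫) • ((‖η‖ ^ (2 * s) • 𝓕 φ₁ η) * conj (𝓕 φ₁ ((√c₁ / √c₂) • η))) := by
    intro η
    simp only [Φ, norm_smul, Real.norm_of_nonneg (Real.sqrt_nonneg c₁),
      Real.mul_rpow (Real.sqrt_nonneg c₁) (norm_nonneg η), smul_smul, inv_mul_cancel₀ hsqrt,
      one_smul, real_inner_smul_left, real_inner_smul_right, real_inner_comm η, div_eq_inv_mul]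
    rw [show a * (√c₁ * ⟪η, e₀⟫) = √c₁ * a * ⟪η, e₀⟫ by ring, mul_smul, smul_mul_assoc,
      smul_comm (‖η‖ ^ (2 * s)) (𝐞 _)]
  have hvol : ∫ ξ, Φ ξ = c₁ • ∫ η, Φ (√c₁ • η) := by
    rw [Measure.integral_comp_smul, finrank_euclideanSpace_fin, Real.sq_sqrt hc₁.le, smul_smul,
      abs_of_pos (inv_pos.2 hc₁), mul_inv_cancel₀ hc₁.ne', one_smul]
  have hscalar : (c₁ ^ ((1 : ℝ) / k) * c₁⁻¹) * (c₂ ^ ((1 : ℝ) / k) * c₂⁻¹) * c₁ * √c₁ ^ (2 * s) =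
      c₁ ^ (s + 1 / k) * c₂ ^ ((1 : ℝ) / k - 1) := by
    rw [Real.sqrt_rpow_two_mul hc₁.le, Real.rpow_sub_one hc₂.ne', Real.rpow_add hc₁]
    field_simp
  calc homInner s (travWave k φ₁ c₁ t) (travWave k φ₁ c₂ t)
      = ∫ ξ, ((c₁ ^ ((1 : ℝ) / k) * c₁⁻¹) * (c₂ ^ ((1 : ℝ) / k) * c₂⁻¹)) • Φ ξ := by
        unfold homInner
        congr 1 with ξ
        rw [fourier_travWave_mul_conj k φ₁ hc₁ hc₂, smul_comm]
    _ = _ := by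
        rw [integral_smul, hvol]
        simp_rw [hΦ]
        rw [integral_smul, ← Real.fourier_eq, smul_smul, smul_smul, hscalar]

theorem travelling_waves_inner_to_zero_general (k : ℕ) (hk : 3 ≤ k)
    (φ₁ : SchwartzMap E2 ℂ) (t : ℝ) (ht : 0 < t) :
    Tendsto
      (fun m : ℕ => homInner (1 - 2 / (k : ℝ))
        (travWave k φ₁ ((m : ℝ) + 1) t) (travWave k φ₁ (m : ℝ) t))
      atTop (𝓝 0) := by
  set s : ℝ := 1 - 2 / (k : ℝ)
  have hs : 0 ≤ 2 * s := by
    have : (2 : ℝ) / k ≤ 1 := by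
      rw [div_le_one (by positivity)]
      exact_mod_cast (by omega : 2 ≤ k)
    linarith
  have hscale := tendsto_natCast_add_one_rpow_mul_rpow (p := s + 1 / k) (q := 1 / k - 1) (by ring)
  have hw : Tendsto (fun m : ℕ => (√((m : ℝ) + 1) * (((m : ℝ) + 1 - m) * t)) • e₀) atTop
      (cocompact E2) := by
    refine tendsto_smul_const_cocompact ?_ (by simp)
    simpa using (Real.tendsto_sqrt_atTop.comp
      ((tendsto_natCast_atTop_atTop).atTop_add tendsto_const_nhds)).atTop_mul_const ht
  have hRL := Real.tendsto_fourier_mul_comp_smul ((𝓕 φ₁).integrable_rpow_norm_smul volume hs)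
    (Complex.continuous_conj.comp (𝓕 φ₁).continuous)
    (fun η => (RCLike.norm_conj _).trans_le ((𝓕 φ₁).norm_le_seminorm ℝ η))
    tendsto_sqrt_natCast_add_one_div_sqrt hw
  have hlim := hscale.smul hRL
  rw [one_smul] at hlim
  refine hlim.congr' ((eventually_ge_atTop 1).mono fun m hm => ?_)
  have hm : (0 : ℝ) < m := by exact_mod_cast hm
  exact (homInner_travWave s k φ₁ (by positivity) hm t).symm

/-- With `c₁ = m+1`, `c₂ = m`, the `Ḣ^{s_c}` inner product of the two travelling
waves at a fixed time `t > 0` tends to `0` as `m → ∞` (Riemann–Lebesgue). -/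
theorem travelling_waves_inner_to_zero (k : ℕ) (hk : 3 ≤ k)
    (φ₁ : SchwartzMap E2 ℂ) (hφ₁ : φ₁ ≠ 0) (t : ℝ) (ht : 0 < t) :
    Tendsto
      (fun m : ℕ => homInner (1 - 2 / (k : ℝ))
        (travWave k φ₁ ((m : ℝ) + 1) t) (travWave k φ₁ (m : ℝ) t))
      atTop (𝓝 0) :=
  travelling_waves_inner_to_zero_general k hk φ₁ t ht
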